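/- arXiv:1709.05191 — 6 statements merged into one kernel-verified Lean document; each statement's English description precedes it below -/
import Mathlib

section
/- If f is a twice continuously differentiable convex function on an open convex set D ⊆ ℝⁿ whose Hessian satisfies 0 ⪯ H(x) ⪯ L·I for all x ∈ D (with L > 0), then for all x, y ∈ D one has ⟨g(y) − g(x), y − x⟩ ≥ (1/L)‖g(y) − g(x)‖², where g denotes the gradient of f. -/
/-!
Along the segment from `x` to `y`, the mean value theorem applied to `z ↦ ⟪w, ∇f z⟫` turns
`⟪w, u⟫` with `u = ∇f y - ∇f x` into `⟪w, H v⟫` for `v = y - x` and the Hessian `H` at some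
point of the segment. For a symmetric `H` with `0 ⪯ H ⪯ L`, positivity of `H` on `u - L v` gives
`2 ⟪u, H v⟫ ≤ ‖u‖² + L ⟪v, H v⟫`, so the choice `w = 2 u - L v` yields `‖u‖² ≤ L ⟪u, v⟫`.
-/

open scoped RealInnerProductSpace

variable {E F : Type*} [NormedAddCommGroup E] [InnerProductSpace ℝ E]

theorem two_mul_inner_le_of_isSymmetric {T : E →ₗ[ℝ] E} (hT : T.IsSymmetric)
    (hpos : ∀ v, 0 ≤ ⟪v, T v⟫) {L : ℝ} (hL : 0 < L) (hbound : ∀ v, ⟪v, T v⟫ ≤ L * ‖v‖ ^ 2)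
    (u v : E) : 2 * ⟪u, T v⟫ ≤ ‖u‖ ^ 2 + L * ⟪v, T v⟫ := by
  have hexpand : ⟪u - L • v, T (u - L • v)⟫
      = ⟪u, T u⟫ - L * (2 * ⟪u, T v⟫) + L ^ 2 * ⟪v, T v⟫ := by
    simp only [map_sub, map_smul, inner_sub_left, inner_sub_right, real_inner_smul_left,
      real_inner_smul_right, ← hT v u, real_inner_comm (T v) u]
    ring
  have hmul : L * (2 * ⟪u, T v⟫) ≤ L * (‖u‖ ^ 2 + L * ⟪v, T v⟫) := by
    nlinarith [hpos (u - L • v), hbound u]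
  exact le_of_mul_le_mul_left hmul hL

theorem exists_mem_segment_inner_sub_eq [NormedAddCommGroup F] [InnerProductSpace ℝ F]
    {G : E → F} {s : Set E} (hG : ∀ z ∈ s, DifferentiableAt ℝ G z) (hs : Convex ℝ s)
    {x y : E} (hx : x ∈ s) (hy : y ∈ s) (w : F) :
    ∃ z ∈ segment ℝ x y, ⟪w, G y - G x⟫ = ⟪w, fderiv ℝ G z (y - x)⟫ := by
  have hderiv : ∀ z ∈ s, HasFDerivWithinAt (fun z => ⟪w, G z⟫)
      ((innerSL ℝ w).comp (fderiv ℝ G z)) s z := fun z hz =>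
    ((innerSL ℝ w).hasFDerivAt.comp z (hG z hz).hasFDerivAt).hasFDerivWithinAt
  obtain ⟨z, hz, heq⟩ := domain_mvt hderiv hs hx hy
  exact ⟨z, hz, by simpa [inner_sub_right] using heq⟩

section Gradient

variable [CompleteSpace E] {f : E → ℝ} {x : E}

theorem gradient_eq_comp_fderiv :
    gradient f = (InnerProductSpace.toDual ℝ E).symm.toContinuousLinearEquiv ∘ fderiv ℝ f :=
  rfl

theorem inner_fderiv_gradient (a b : E) :
    ⟪a, fderiv ℝ (gradient f) x b⟫ = fderiv ℝ (fderiv ℝ f) x b a := by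
  rw [gradient_eq_comp_fderiv, ContinuousLinearEquiv.comp_fderiv, real_inner_comm]
  exact InnerProductSpace.toDual_symm_apply

theorem ContDiffAt.differentiableAt_gradient (hf : ContDiffAt ℝ 2 f x) :
    DifferentiableAt ℝ (gradient f) x := by
  rw [gradient_eq_comp_fderiv]
  exact (ContinuousLinearEquiv.differentiableAt _).comp x
    ((hf.fderiv_right (m := 1) le_rfl).differentiableAt one_ne_zero)

theorem ContDiffAt.isSymmetric_fderiv_gradient (hf : ContDiffAt ℝ 2 f x) :
    (fderiv ℝ (gradient f) x : E →ₗ[ℝ] E).IsSymmetric := fun a b => by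
  simp only [ContinuousLinearMap.coe_coe]
  rw [real_inner_comm, inner_fderiv_gradient, inner_fderiv_gradient]
  exact hf.isSymmSndFDerivAt (by simp) a b

end Gradient

theorem stmt0_general {n : ℕ} (D : Set (EuclideanSpace ℝ (Fin n)))
    (f : EuclideanSpace ℝ (Fin n) → ℝ) (L : ℝ) (hL : 0 < L)
    (hDopen : IsOpen D) (hDconv : Convex ℝ D)
    (hf : ContDiffOn ℝ 2 f D)
    (hH : ∀ x ∈ D, ∀ (v : EuclideanSpace ℝ (Fin n)),
        0 ≤ ⟪v, fderiv ℝ (gradient f) x v⟫ ∧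
        ⟪v, fderiv ℝ (gradient f) x v⟫ ≤ L * ‖v‖ ^ 2) :
    ∀ x ∈ D, ∀ y ∈ D,
      ⟪gradient f y - gradient f x, y - x⟫ ≥
        (1 / L) * ‖gradient f y - gradient f x‖ ^ 2 := by
  intro x hx y hy
  set u := gradient f y - gradient f x
  have hf' : ∀ z ∈ D, ContDiffAt ℝ 2 f z := fun z hz => hf.contDiffAt (hDopen.mem_nhds hz)
  obtain ⟨z, hz, hmvt⟩ := exists_mem_segment_inner_sub_eq
    (fun z hz => (hf' z hz).differentiableAt_gradient) hDconv hx hy ((2 : ℝ) • u - L • (y - x))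
  change ⟪_, u⟫ = _ at hmvt
  have hzD : z ∈ D := hDconv.segment_subset hx hy hz
  have hHessian := two_mul_inner_le_of_isSymmetric (hf' z hzD).isSymmetric_fderiv_gradient
    (fun v => (hH z hzD v).1) hL (fun v => (hH z hzD v).2) u (y - x)
  simp only [ContinuousLinearMap.coe_coe] at hHessian
  simp only [inner_sub_left ((2 : ℝ) • u), real_inner_smul_left, real_inner_self_eq_norm_sq] at hmvt
  rw [ge_iff_le, one_div, inv_mul_le_iff₀ hL, real_inner_comm]
  linarith

/-- If `f` is a twice continuously differentiable convex function on an open convex set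
`D ⊆ ℝⁿ` whose Hessian satisfies `0 ⪯ H(x) ⪯ L·I` on `D` (with `L > 0`), then for all
`x, y ∈ D` one has `⟨g(y) − g(x), y − x⟩ ≥ (1/L)‖g(y) − g(x)‖²`. -/
theorem stmt0 {n : ℕ} (D : Set (EuclideanSpace ℝ (Fin n)))
    (f : EuclideanSpace ℝ (Fin n) → ℝ) (L : ℝ) (hL : 0 < L)
    (hDopen : IsOpen D) (hDconv : Convex ℝ D)
    (hf : ContDiffOn ℝ 2 f D)
    (hconv : ConvexOn ℝ D f)
    (hH : ∀ x ∈ D, ∀ (v : EuclideanSpace ℝ (Fin n)),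
        0 ≤ ⟪v, fderiv ℝ (gradient f) x v⟫ ∧
        ⟪v, fderiv ℝ (gradient f) x v⟫ ≤ L * ‖v‖ ^ 2) :
    ∀ x ∈ D, ∀ y ∈ D,
      ⟪gradient f y - gradient f x, y - x⟫ ≥
        (1 / L) * ‖gradient f y - gradient f x‖ ^ 2 :=
  stmt0_general D f L hL hDopen hDconv hf hH
end

section
/- Let f ∈ F_{μ,L}(ℝⁿ) with minimizer x_*, κ = μ/L, and let 0 ≤ ε ≤ 2√κ/(1+κ). Suppose x₁ = x₀ − γd where γ is chosen by exact line search along −d (so ⟨g(x₁), x₁ − x₀⟩ = 0) and the direction d satisfies ⟨g(x₀), g(x₁)⟩ ≤ ε‖g(x₀)‖‖g(x₁)‖. Then ‖g(x₁)‖ ≤ (ε + √(1−ε²)·(1−κ)/(2√κ))·‖g(x₀)‖. -/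
/-!
Write `g₀, g₁` for the two gradients and `s = x₀ - x₁`. The interpolation inequality of `F_{μ,L}`
at `(x₀, x₁)`, `‖g₀ - g₁‖² + μL‖s‖² ≤ (μ + L)⟪g₀ - g₁, s⟫`, together with the line-search condition
`⟪g₁, s⟫ = 0` already forces the bound. Split `g₀` into its component `a = ⟪g₀, g₁⟫ / ‖g₁‖`
along `g₁` and a part `p ⊥ g₁`. Then `⟪g₀ - g₁, s⟫ = ⟪p, s⟫ ≤ ‖p‖‖s‖`, and maximizing the
resulting quadratic in `‖s‖` gives `‖g₁‖ ≤ a + C‖p‖` with `C = (1 - κ) / (2√κ)` and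
`‖p‖ = √(‖g₀‖² - a²)`. The angle condition says `a ≤ ε‖g₀‖`, and `a ↦ a + C√(‖g₀‖² - a²)`
increases for `a ≤ ‖g₀‖ / √(1 + C²)`, a threshold which `ε‖g₀‖` does not exceed since
`2√κ / (1 + κ) = 1 / √(1 + C²)`.
-/

open scoped RealInnerProductSpace
open InnerProductSpace Set

variable {E : Type*} [NormedAddCommGroup E] [InnerProductSpace ℝ E]

section Gradient

variable [CompleteSpace E]

theorem ConvexOn.add_inner_le_of_hasGradientAt {φ : E → ℝ} {g x : E}
    (hφ : ConvexOn ℝ univ φ) (hg : HasGradientAt φ g x) (y : E) :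
    φ x + ⟪g, y - x⟫ ≤ φ y := by
  have hline : ConvexOn ℝ univ (φ ∘ AffineMap.lineMap (k := ℝ) x y) := by
    simpa using hφ.comp_affineMap (AffineMap.lineMap x y)
  have hderiv : HasDerivAt (φ ∘ AffineMap.lineMap (k := ℝ) x y) ⟪g, y - x⟫ 0 := by
    simpa [toDual_apply_apply] using
      (AffineMap.lineMap_apply_zero (k := ℝ) x y ▸ hg.hasFDerivAt).comp_hasDerivAt (0 : ℝ)
        (AffineMap.hasDerivAt_lineMap (a := x) (b := y))
  have hslope := hline.le_slope_of_hasDerivAt (mem_univ 0) (mem_univ 1) zero_lt_one hderiv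
  simp only [slope_def_field, Function.comp_apply, AffineMap.lineMap_apply_one,
    AffineMap.lineMap_apply_zero, sub_zero, div_one] at hslope
  linarith

theorem ConvexOn.inner_sub_nonneg_of_hasGradientAt {φ : E → ℝ} {G : E → E}
    (hφ : ConvexOn ℝ univ φ) (hG : ∀ x, HasGradientAt φ (G x) x) (x y : E) :
    0 ≤ ⟪G x - G y, x - y⟫ := by
  have hx := hφ.add_inner_le_of_hasGradientAt (hG x) y
  have hy := hφ.add_inner_le_of_hasGradientAt (hG y) x
  rw [← neg_sub, inner_neg_right] at hx
  rw [inner_sub_left]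
  linarith

theorem le_add_inner_add_sq_of_lipschitz_gradient {φ : E → ℝ} {G : E → E} {M : ℝ}
    (hG : ∀ x, HasGradientAt φ (G x) x) (hM : ∀ x y, ‖G x - G y‖ ≤ M * ‖x - y‖) (x y : E) :
    φ y ≤ φ x + ⟪G x, y - x⟫ + M / 2 * ‖y - x‖ ^ 2 := by
  set v := y - x
  let χ : ℝ → ℝ := fun t => φ (x + t • v) - t * ⟪G x, v⟫ - M / 2 * ‖v‖ ^ 2 * t ^ 2
  have hχ : ∀ t, HasDerivAt χ (⟪G (x + t • v) - G x, v⟫ - M * ‖v‖ ^ 2 * t) t := by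
    intro t
    have hline : HasDerivAt (fun s : ℝ => x + s • v) v t := by
      simpa using ((hasDerivAt_id t).smul_const v).const_add x
    have hφ := (hG (x + t • v)).hasFDerivAt.comp_hasDerivAt t hline
    refine ((hφ.sub ((hasDerivAt_id t).mul_const ⟪G x, v⟫)).sub
      ((hasDerivAt_pow 2 t).const_mul (M / 2 * ‖v‖ ^ 2))).congr_deriv ?_
    simp only [toDual_apply_apply, inner_sub_left]
    ring
  have hanti : AntitoneOn χ (Ici 0) := by
    refine antitoneOn_of_hasDerivWithinAt_nonpos (convex_Ici 0)
      (fun t _ => (hχ t).continuousAt.continuousWithinAt)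
      (fun t _ => (hχ t).hasDerivWithinAt) fun t ht => ?_
    rw [interior_Ici, mem_Ioi] at ht
    have hlip : ‖G (x + t • v) - G x‖ ≤ M * (t * ‖v‖) := by
      simpa [norm_smul, abs_of_pos ht] using hM (x + t • v) x
    have := real_inner_le_norm (G (x + t • v) - G x) v
    nlinarith [norm_nonneg v]
  have h01 : χ 1 ≤ χ 0 := hanti self_mem_Ici (mem_Ici.2 zero_le_one) zero_le_one
  have hχ0 : χ 0 = φ x := by simp [χ]
  have hχ1 : χ 1 = φ y - ⟪G x, v⟫ - M / 2 * ‖v‖ ^ 2 := by simp [χ, v]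
  rw [hχ0, hχ1] at h01
  linarith

theorem ConvexOn.add_inner_add_sq_le {φ : E → ℝ} {G : E → E} {M : ℝ}
    (hφ : ConvexOn ℝ univ φ) (hG : ∀ x, HasGradientAt φ (G x) x) (hM : 0 < M)
    (hupper : ∀ x y, φ y ≤ φ x + ⟪G x, y - x⟫ + M / 2 * ‖y - x‖ ^ 2) (x y : E) :
    φ x + ⟪G x, y - x⟫ + ‖G y - G x‖ ^ 2 / (2 * M) ≤ φ y := by
  set w := G y - G x
  set z := y - M⁻¹ • w
  have hlow := hφ.add_inner_le_of_hasGradientAt (hG x) z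
  have hup := hupper y z
  have hzy : z - y = -(M⁻¹ • w) := by simp [z]
  have hzx : z - x = (y - x) - M⁻¹ • w := by simp only [z]; abel
  rw [hzy, inner_neg_right, real_inner_smul_right, norm_neg, norm_smul, Real.norm_eq_abs,
    abs_of_pos (inv_pos.2 hM)] at hup
  rw [hzx, inner_sub_right, real_inner_smul_right] at hlow
  have hw : ⟪G y, w⟫ - ⟪G x, w⟫ = ‖w‖ ^ 2 := by
    rw [← inner_sub_left, real_inner_self_eq_norm_sq]
  have hsplit : ‖w‖ ^ 2 / (2 * M) = M⁻¹ * (⟪G y, w⟫ - ⟪G x, w⟫) - M / 2 * (M⁻¹ * ‖w‖) ^ 2 := by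
    rw [hw]; field_simp; ring
  linarith

theorem ConvexOn.norm_sub_sq_le_mul_inner {φ : E → ℝ} {G : E → E} {M : ℝ}
    (hφ : ConvexOn ℝ univ φ) (hG : ∀ x, HasGradientAt φ (G x) x) (hM : 0 < M)
    (hupper : ∀ x y, φ y ≤ φ x + ⟪G x, y - x⟫ + M / 2 * ‖y - x‖ ^ 2) (x y : E) :
    ‖G x - G y‖ ^ 2 ≤ M * ⟪G x - G y, x - y⟫ := by
  have hxy := hφ.add_inner_add_sq_le hG hM hupper x y
  have hyx := hφ.add_inner_add_sq_le hG hM hupper y x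
  rw [norm_sub_rev] at hxy
  have hinner : ⟪G x - G y, x - y⟫ = -⟪G x, y - x⟫ - ⟪G y, x - y⟫ := by
    rw [← neg_sub y x, inner_sub_left, inner_neg_right, inner_neg_right]
  have hnorm : ‖G x - G y‖ ^ 2 = M * (2 * (‖G x - G y‖ ^ 2 / (2 * M))) := by field_simp
  rw [hinner, hnorm]
  gcongr
  linarith

theorem HasGradientAt.sub_half_mul_norm_sq {f : E → ℝ} {g x : E} (hf : HasGradientAt f g x)
    (μ : ℝ) : HasGradientAt (fun y => f y - μ / 2 * ‖y‖ ^ 2) (g - μ • x) x := by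
  rw [hasGradientAt_iff_hasFDerivAt]
  refine (hf.hasFDerivAt.sub
    ((hasStrictFDerivAt_norm_sq x).hasFDerivAt.const_smul (μ / 2))).congr_fderiv ?_
  ext y
  simp only [sub_apply, toDual_apply_apply, smul_apply,
    coe_innerSL_apply, nsmul_eq_mul, Nat.cast_ofNat, smul_eq_mul, map_sub, map_smul]
  ring

theorem norm_sub_sq_add_mul_sq_le_inner {f : E → ℝ} {μ L : ℝ} (hμ : 0 ≤ μ) (hμL : μ ≤ L)
    (hdiff : Differentiable ℝ f) (hsc : ConvexOn ℝ univ (fun x => f x - μ / 2 * ‖x‖ ^ 2))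
    (hlip : ∀ x y, ‖gradient f x - gradient f y‖ ≤ L * ‖x - y‖) (x y : E) :
    ‖gradient f x - gradient f y‖ ^ 2 + μ * L * ‖x - y‖ ^ 2 ≤
      (μ + L) * ⟪gradient f x - gradient f y, x - y⟫ := by
  have hgrad : ∀ x, HasGradientAt (fun y => f y - μ / 2 * ‖y‖ ^ 2) (gradient f x - μ • x) x :=
    fun x => (hdiff x).hasGradientAt.sub_half_mul_norm_sq μ
  have hshift : (gradient f x - μ • x) - (gradient f y - μ • y) =
      (gradient f x - gradient f y) - μ • (x - y) := by
    rw [smul_sub]; abel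
  rcases hμL.eq_or_lt with rfl | hlt
  · have hmono := hsc.inner_sub_nonneg_of_hasGradientAt hgrad x y
    rw [hshift, inner_sub_left, real_inner_smul_left, real_inner_self_eq_norm_sq] at hmono
    nlinarith [hlip x y, norm_nonneg (gradient f x - gradient f y), norm_nonneg (x - y)]
  -- `f - μ/2‖·‖²` is convex and `(L - μ)`-smooth, so its gradient is `(L - μ)`-cocoercive.
  have hupper : ∀ x y, f y - μ / 2 * ‖y‖ ^ 2 ≤ f x - μ / 2 * ‖x‖ ^ 2 +
      ⟪gradient f x - μ • x, y - x⟫ + (L - μ) / 2 * ‖y - x‖ ^ 2 := by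
    intro x y
    have hf := le_add_inner_add_sq_of_lipschitz_gradient (fun x => (hdiff x).hasGradientAt) hlip x y
    have hy : ‖y‖ ^ 2 = ‖x‖ ^ 2 + 2 * ⟪x, y - x⟫ + ‖y - x‖ ^ 2 := by
      simpa using norm_add_sq_real x (y - x)
    rw [inner_sub_left, real_inner_smul_left]
    linear_combination hf - μ / 2 * hy
  have hcoco := hsc.norm_sub_sq_le_mul_inner hgrad (sub_pos.2 hlt) hupper x y
  rw [hshift, norm_sub_sq_real, real_inner_smul_right, norm_smul, mul_pow, Real.norm_eq_abs,
    sq_abs, inner_sub_left _ (μ • _), real_inner_smul_left, real_inner_self_eq_norm_sq] at hcoco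
  linear_combination hcoco

end Gradient

theorem sq_inner_div_norm_le (u v : E) : (⟪u, v⟫ / ‖v‖) ^ 2 ≤ ‖u‖ ^ 2 := by
  rw [sq_le_sq, abs_div, abs_norm, abs_norm]
  exact div_le_of_le_mul₀ (norm_nonneg _) (norm_nonneg _) (abs_real_inner_le_norm u v)

theorem inner_sq_le_of_inner_eq_zero {u v s : E} (h : ⟪v, s⟫ = 0) :
    ⟪u, s⟫ ^ 2 ≤ (‖u‖ ^ 2 - (⟪u, v⟫ / ‖v‖) ^ 2) * ‖s‖ ^ 2 := by
  set p := u - (⟪u, v⟫ / ‖v‖ ^ 2) • v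
  have hps : ⟪p, s⟫ = ⟪u, s⟫ := by simp [p, inner_sub_left, real_inner_smul_left, h]
  have hp : ‖p‖ ^ 2 = ‖u‖ ^ 2 - (⟪u, v⟫ / ‖v‖) ^ 2 := by
    rcases eq_or_ne v 0 with rfl | hv
    · simp [p]
    rw [norm_sub_sq_real, real_inner_smul_right, norm_smul, mul_pow, Real.norm_eq_abs, sq_abs]
    field_simp
    ring
  rw [← hps, ← hp, ← mul_pow, sq_le_sq, abs_mul, abs_norm, abs_norm]
  exact abs_real_inner_le_norm p s

theorem sq_sub_le_of_interpolation {μ L : ℝ} (hμ : 0 ≤ μ) (hL : 0 ≤ L) {g₀ g₁ s : E}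
    (horth : ⟪g₁, s⟫ = 0)
    (hint : ‖g₀ - g₁‖ ^ 2 + μ * L * ‖s‖ ^ 2 ≤ (μ + L) * ⟪g₀ - g₁, s⟫) :
    4 * μ * L * (‖g₁‖ - ⟪g₀, g₁⟫ / ‖g₁‖) ^ 2 ≤
      (L - μ) ^ 2 * (‖g₀‖ ^ 2 - (⟪g₀, g₁⟫ / ‖g₁‖) ^ 2) := by
  set a := ⟪g₀, g₁⟫ / ‖g₁‖
  have ha : a * ‖g₁‖ = ⟪g₀, g₁⟫ := by
    rcases eq_or_ne g₁ 0 with rfl | hg₁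
    · simp
    exact div_mul_cancel₀ _ (norm_ne_zero_iff.2 hg₁)
  have hr : √(‖g₀‖ ^ 2 - a ^ 2) ^ 2 = ‖g₀‖ ^ 2 - a ^ 2 :=
    Real.sq_sqrt (sub_nonneg.2 (sq_inner_div_norm_le g₀ g₁))
  set r := √(‖g₀‖ ^ 2 - a ^ 2)
  have hP : ⟪g₀ - g₁, s⟫ ≤ r * ‖s‖ := by
    rw [inner_sub_left, horth, sub_zero]
    refine le_of_sq_le_sq ?_ (by positivity)
    rw [mul_pow, hr]
    exact inner_sq_le_of_inner_eq_zero horth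
  have hQ : ‖g₀ - g₁‖ ^ 2 = (‖g₁‖ - a) ^ 2 + r ^ 2 := by
    rw [norm_sub_sq_real, ← ha, hr]; ring
  rw [← hr]
  -- bound `(μ + L) r ‖s‖ - μL‖s‖²` by its maximum over `‖s‖`
  nlinarith [sq_nonneg (2 * μ * L * ‖s‖ - (μ + L) * r),
    mul_le_mul_of_nonneg_left hP (add_nonneg hμ hL), mul_nonneg hμ hL]

theorem add_mul_le_add_mul_of_sq_add_sq_eq {a b r ρ C : ℝ} (hab : a ≤ b) (hC : 0 ≤ C)
    (hρ : 0 ≤ ρ) (hcircle : a ^ 2 + r ^ 2 = b ^ 2 + ρ ^ 2) (hbρ : C * b ≤ ρ) :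
    a + C * r ≤ b + C * ρ := by
  rcases le_or_gt r ρ with hrρ | hρr
  · nlinarith
  · have key : (r + ρ) * (b - a + C * (ρ - r)) = (b - a) * (r + ρ - C * (a + b)) := by
      linear_combination -C * hcircle
    have hfactor : 0 ≤ (b - a) * (r + ρ - C * (a + b)) := mul_nonneg (by linarith) (by nlinarith)
    nlinarith

theorem one_sub_div_mul_le_sqrt {κ ε : ℝ} (hκ : 0 < κ) (hε0 : 0 ≤ ε)
    (hε : ε ≤ 2 * √κ / (1 + κ)) : (1 - κ) / (2 * √κ) * ε ≤ √(1 - ε ^ 2) := by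
  have hσ : 0 < √κ := Real.sqrt_pos.2 hκ
  have hσκ : √κ ^ 2 = κ := Real.sq_sqrt hκ.le
  have hε' : ε * (1 + κ) ≤ 2 * √κ := (le_div_iff₀ (by positivity)).1 hε
  rcases le_or_gt ((1 - κ) / (2 * √κ) * ε) 0 with hneg | hpos
  · exact hneg.trans (Real.sqrt_nonneg _)
  rw [Real.le_sqrt' hpos, mul_pow, div_pow, mul_pow, hσκ, div_mul_eq_mul_div,
    div_le_iff₀ (by positivity)]
  nlinarith [mul_le_mul hε' hε' (by positivity) (by positivity)]

theorem norm_le_of_interpolation {μ L ε : ℝ} (hμ : 0 < μ) (hμL : μ ≤ L) (hε0 : 0 ≤ ε)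
    (hε : ε ≤ 2 * √(μ / L) / (1 + μ / L)) {g₀ g₁ s : E} (horth : ⟪g₁, s⟫ = 0)
    (hint : ‖g₀ - g₁‖ ^ 2 + μ * L * ‖s‖ ^ 2 ≤ (μ + L) * ⟪g₀ - g₁, s⟫)
    (hangle : ⟪g₀, g₁⟫ ≤ ε * ‖g₀‖ * ‖g₁‖) :
    ‖g₁‖ ≤ (ε + √(1 - ε ^ 2) * (1 - μ / L) / (2 * √(μ / L))) * ‖g₀‖ := by
  have hL : 0 < L := hμ.trans_le hμL
  have hκ : 0 < μ / L := div_pos hμ hL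
  set C := (1 - μ / L) / (2 * √(μ / L))
  have hC : 0 ≤ C := div_nonneg (sub_nonneg.2 ((div_le_one hL).2 hμL)) (by positivity)
  have hε1 : ε ≤ 1 := hε.trans <| (div_le_one (by positivity)).2 <| by
    nlinarith [Real.sq_sqrt hκ.le, sq_nonneg (√(μ / L) - 1)]
  rw [mul_div_assoc]
  rcases eq_or_ne g₁ 0 with rfl | hg₁
  · simp only [norm_zero]
    positivity
  set a := ⟪g₀, g₁⟫ / ‖g₁‖
  have ha : a ≤ ε * ‖g₀‖ := (div_le_iff₀ (norm_pos_iff.2 hg₁)).2 hangle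
  have hstep : ‖g₁‖ - a ≤ C * √(‖g₀‖ ^ 2 - a ^ 2) := by
    have hC2 : 4 * μ * L * C ^ 2 = (L - μ) ^ 2 := by
      rw [div_pow, mul_pow, Real.sq_sqrt hκ.le]
      field_simp
      ring
    refine le_of_sq_le_sq ?_ (by positivity)
    rw [mul_pow, Real.sq_sqrt (sub_nonneg.2 (sq_inner_div_norm_le g₀ g₁))]
    refine le_of_mul_le_mul_left ?_ (by positivity : 0 < 4 * μ * L)
    rw [← mul_assoc, hC2]
    exact sq_sub_le_of_interpolation hμ.le hL.le horth hint
  calc ‖g₁‖ ≤ a + C * √(‖g₀‖ ^ 2 - a ^ 2) := by linarith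
    _ ≤ ε * ‖g₀‖ + C * (√(1 - ε ^ 2) * ‖g₀‖) := by
      refine add_mul_le_add_mul_of_sq_add_sq_eq ha hC (by positivity) ?_ ?_
      · rw [mul_pow, mul_pow, Real.sq_sqrt (sub_nonneg.2 (sq_inner_div_norm_le g₀ g₁)),
          Real.sq_sqrt (sub_nonneg.2 (pow_le_one₀ hε0 hε1))]
        ring
      calc C * (ε * ‖g₀‖) = C * ε * ‖g₀‖ := by ring
        _ ≤ √(1 - ε ^ 2) * ‖g₀‖ := by gcongr; exact one_sub_div_mul_le_sqrt hκ hε0 hε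
    _ = (ε + √(1 - ε ^ 2) * C) * ‖g₀‖ := by ring

theorem stmt5_general {n : ℕ} (f : EuclideanSpace ℝ (Fin n) → ℝ) (μ L : ℝ)
    (hμ : 0 < μ) (hμL : μ ≤ L)
    (hdiff : Differentiable ℝ f)
    -- μ-strong convexity
    (hsc : ConvexOn ℝ Set.univ (fun x => f x - μ / 2 * ‖x‖ ^ 2))
    -- L-Lipschitz gradient
    (hlip : ∀ x y, ‖gradient f x - gradient f y‖ ≤ L * ‖x - y‖)
    (x₀ x₁ : EuclideanSpace ℝ (Fin n)) (ε : ℝ)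
    (hε0 : 0 ≤ ε) (hε1 : ε ≤ 2 * Real.sqrt (μ / L) / (1 + μ / L))
    (hels : ⟪gradient f x₁, x₁ - x₀⟫ = 0)
    (hang : ⟪gradient f x₀, gradient f x₁⟫ ≤ ε * ‖gradient f x₀‖ * ‖gradient f x₁‖) :
    ‖gradient f x₁‖ ≤
      (ε + Real.sqrt (1 - ε ^ 2) * (1 - μ / L) / (2 * Real.sqrt (μ / L))) *
        ‖gradient f x₀‖ := by
  have horth : ⟪gradient f x₁, x₀ - x₁⟫ = 0 := by
    rw [← neg_sub, inner_neg_right, hels, neg_zero]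
  exact norm_le_of_interpolation hμ hμL hε0 hε1 horth
    (norm_sub_sq_add_mul_sq_le_inner hμ.le hμL hdiff hsc hlip x₀ x₁) hang

/-- Inexact gradient method with exact line search on `f ∈ F_{μ,L}(ℝⁿ)`:
worst-case contraction of the gradient norm. -/
theorem stmt5 {n : ℕ} (f : EuclideanSpace ℝ (Fin n) → ℝ) (μ L : ℝ)
    (hμ : 0 < μ) (hμL : μ ≤ L)
    (hdiff : Differentiable ℝ f)
    -- μ-strong convexity
    (hsc : ConvexOn ℝ Set.univ (fun x => f x - μ / 2 * ‖x‖ ^ 2))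
    -- L-Lipschitz gradient
    (hlip : ∀ x y, ‖gradient f x - gradient f y‖ ≤ L * ‖x - y‖)
    (xstar x₀ x₁ d : EuclideanSpace ℝ (Fin n)) (γ ε : ℝ)
    (hmin : ∀ x, f xstar ≤ f x)
    (hε0 : 0 ≤ ε) (hε1 : ε ≤ 2 * Real.sqrt (μ / L) / (1 + μ / L))
    (hstep : x₁ = x₀ - γ • d)
    (hels : ⟪gradient f x₁, x₁ - x₀⟫ = 0)
    (hang : ⟪gradient f x₀, gradient f x₁⟫ ≤ ε * ‖gradient f x₀‖ * ‖gradient f x₁‖) :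
    ‖gradient f x₁‖ ≤
      (ε + Real.sqrt (1 - ε ^ 2) * (1 - μ / L) / (2 * Real.sqrt (μ / L))) *
        ‖gradient f x₀‖ :=
  stmt5_general f μ L hμ hμL hdiff hsc hlip x₀ x₁ ε hε0 hε1 hels hang
end

section
/- Under the same hypotheses (f ∈ F_{μ,L}(ℝⁿ), exact line search with inexact direction satisfying ⟨g(x₀), g(x₁)⟩ ≤ ε‖g(x₀)‖‖g(x₁)‖, 0 ≤ ε ≤ 2√κ/(1+κ), κ = μ/L), one has ‖x₁ − x_*‖ ≤ (ε + √(1−ε²)·(1−κ)/(2√κ))·‖x₀ − x_*‖. -/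
/-!
The interpolation inequality for `μ`-strongly convex `L`-smooth functions, taken at the minimiser
and combined with AM-GM, gives `⟪∇f x, x - x⋆⟫ ≥ c ‖∇f x‖ ‖x - x⋆‖` with `c = 2√κ / (1 + κ)`:
the angle between `∇f x` and `x - x⋆` is at most `arccos c`. The angle between `∇f x₀` and
`∇f x₁` is at least `arccos ε`, so by the triangle inequality for angles the angle between
`∇f x₁` and `x₀ - x⋆` is at least `arccos ε - arccos c`. Exact line search makes
`⟪∇f x₁, x₁ - x⋆⟫ = ⟪∇f x₁, x₀ - x⋆⟫`, hence
`c ‖x₁ - x⋆‖ ≤ cos (arccos ε - arccos c) ‖x₀ - x⋆‖`, and `cos (arccos ε - arccos c) / c` is the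
stated factor since `√(1 - c²) = (1 - κ) / (1 + κ)`.
-/

open scoped RealInnerProductSpace Gradient
open Set InnerProductGeometry Real

section AngleBound

variable {V : Type*} [NormedAddCommGroup V] [InnerProductSpace ℝ V]

theorem cos_arccos_sub_arccos {x y : ℝ} (hx : -1 ≤ x) (hxy : x ≤ y) (hy : y ≤ 1) :
    cos (arccos x - arccos y) = x * y + √(1 - x ^ 2) * √(1 - y ^ 2) := by
  rw [cos_sub, cos_arccos hx (hxy.trans hy), cos_arccos (hx.trans hxy) hy, sin_arccos,
    sin_arccos]

theorem InnerProductGeometry.arccos_le_angle {x y : V} {c : ℝ} (hx : x ≠ 0) (hy : y ≠ 0)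
    (h : ⟪x, y⟫ ≤ c * ‖x‖ * ‖y‖) : arccos c ≤ angle x y := by
  refine arccos_le_arccos ((div_le_iff₀ (by positivity)).2 ?_)
  linarith

theorem InnerProductGeometry.angle_le_arccos {x y : V} {c : ℝ} (hx : x ≠ 0) (hy : y ≠ 0)
    (h : c * ‖x‖ * ‖y‖ ≤ ⟪x, y⟫) : angle x y ≤ arccos c := by
  refine arccos_le_arccos ((le_div_iff₀ (by positivity)).2 ?_)
  linarith

theorem inner_le_of_inner_le_of_le_inner {g₀ g₁ r : V} {ε c : ℝ} (hg₀ : g₀ ≠ 0) (hε : -1 ≤ ε)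
    (hεc : ε ≤ c) (hc : c ≤ 1) (hg : ⟪g₀, g₁⟫ ≤ ε * ‖g₀‖ * ‖g₁‖)
    (hr : c * ‖g₀‖ * ‖r‖ ≤ ⟪g₀, r⟫) :
    ⟪g₁, r⟫ ≤ (ε * c + √(1 - ε ^ 2) * √(1 - c ^ 2)) * ‖g₁‖ * ‖r‖ := by
  rcases eq_or_ne g₁ 0 with rfl | hg₁
  · simp
  rcases eq_or_ne r 0 with rfl | hr₀
  · simp
  have hangle : arccos ε - arccos c ≤ angle g₁ r := by
    linarith [angle_le_angle_add_angle g₀ r g₁, angle_comm r g₁, arccos_le_angle hg₀ hg₁ hg,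
      angle_le_arccos hg₀ hr₀ hr]
  rw [← cos_angle_mul_norm_mul_norm, ← cos_arccos_sub_arccos hε hεc hc, mul_assoc]
  gcongr
  exact cos_le_cos_of_nonneg_of_le_pi (sub_nonneg.2 (arccos_le_arccos hεc)) (angle_le_pi _ _)
    hangle

end AngleBound

section Smooth

variable {E : Type*} [NormedAddCommGroup E] [InnerProductSpace ℝ E] [CompleteSpace E]
  {h : E → ℝ}

theorem ConvexOn.add_le_of_hasDerivAt_zero {ψ : ℝ → ℝ} {d : ℝ} (hψ : ConvexOn ℝ univ ψ)
    (hd : HasDerivAt ψ d 0) : ψ 0 + d ≤ ψ 1 := by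
  have := hψ.le_slope_of_hasDerivAt (mem_univ 0) (mem_univ 1) one_pos hd
  rw [slope_def_field, sub_zero, div_one] at this
  linarith

theorem hasDerivAt_apply_add_smul (hh : Differentiable ℝ h) (x v : E) (t : ℝ) :
    HasDerivAt (fun t : ℝ => h (x + t • v)) ⟪∇ h (x + t • v), v⟫ t := by
  have hline : HasDerivAt (fun t : ℝ => x + t • v) v t := by
    simpa using ((hasDerivAt_id t).smul_const v).const_add x
  rw [inner_gradient_left]
  exact (hh _).hasFDerivAt.comp_hasDerivAt t hline

theorem ConvexOn.add_inner_gradient_le (hc : ConvexOn ℝ univ h) (hh : Differentiable ℝ h)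
    (x y : E) : h x + ⟪∇ h x, y - x⟫ ≤ h y := by
  have hline : ConvexOn ℝ univ (fun t : ℝ => h (x + t • (y - x))) := by
    simpa [Function.comp_def, AffineMap.lineMap_apply_module', add_comm] using
      hc.comp_affineMap (AffineMap.lineMap x y)
  simpa using hline.add_le_of_hasDerivAt_zero (hasDerivAt_apply_add_smul hh x (y - x) 0)

theorem ConvexOn.inner_gradient_sub_gradient_nonneg (hc : ConvexOn ℝ univ h)
    (hh : Differentiable ℝ h) (x y : E) : 0 ≤ ⟪∇ h x - ∇ h y, x - y⟫ := by
  have hxy := hc.add_inner_gradient_le hh x y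
  have hyx := hc.add_inner_gradient_le hh y x
  rw [← neg_sub x y, inner_neg_right] at hxy
  rw [inner_sub_left]
  linarith

theorem le_add_inner_gradient_add_sq {K : ℝ} (hh : Differentiable ℝ h)
    (hK : ∀ a b : E, ⟪∇ h a - ∇ h b, a - b⟫ ≤ K * ‖a - b‖ ^ 2) (x y : E) :
    h y ≤ h x + ⟪∇ h x, y - x⟫ + K / 2 * ‖y - x‖ ^ 2 := by
  set v := y - x
  let ψ : ℝ → ℝ := fun t => K * ‖v‖ ^ 2 * t ^ 2 / 2 - h (x + t • v)
  have hψ : ∀ t, HasDerivAt ψ (K * ‖v‖ ^ 2 * t - ⟪∇ h (x + t • v), v⟫) t := fun t =>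
    ((((hasDerivAt_pow 2 t).const_mul (K * ‖v‖ ^ 2)).div_const 2).sub
      (hasDerivAt_apply_add_smul hh x v t)).congr_deriv (by ring)
  have hmono : Monotone (deriv ψ) := by
    intro a b hab
    have hK' := hK (x + b • v) (x + a • v)
    rw [show x + b • v - (x + a • v) = (b - a) • v by module, norm_smul, mul_pow,
      Real.norm_eq_abs, sq_abs, real_inner_smul_right, inner_sub_left] at hK'
    simp only [(hψ _).deriv]
    rcases hab.eq_or_lt with rfl | hlt
    · rfl
    have := le_of_mul_le_mul_left
      (hK'.trans_eq (by ring : _ = (b - a) * (K * ‖v‖ ^ 2 * b - K * ‖v‖ ^ 2 * a)))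
      (sub_pos.2 hlt)
    linarith
  have hconv := hmono.convexOn_univ_of_deriv fun t => (hψ t).differentiableAt
  have := hconv.add_le_of_hasDerivAt_zero (hψ 0)
  simp only [ψ, zero_smul, add_zero, one_smul, v, add_sub_cancel] at this
  linarith

theorem ConvexOn.add_inner_gradient_add_norm_sq_le (hc : ConvexOn ℝ univ h)
    (hh : Differentiable ℝ h) {K : ℝ} (hK₀ : 0 < K)
    (hK : ∀ a b : E, ⟪∇ h a - ∇ h b, a - b⟫ ≤ K * ‖a - b‖ ^ 2) (p q : E) :
    h p + ⟪∇ h p, q - p⟫ + ‖∇ h q - ∇ h p‖ ^ 2 / (2 * K) ≤ h q := by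
  set w := ∇ h q - ∇ h p
  -- compare the tangent plane at `p` with the quadratic upper model at `q`, at the point `z`
  -- where the upper model of `h - ⟪∇h p, ·⟫` is smallest
  set z := q - K⁻¹ • w
  have hlow := hc.add_inner_gradient_le hh p z
  have hup := le_add_inner_gradient_add_sq hh hK q z
  rw [show z - p = (q - p) - K⁻¹ • w by module, inner_sub_right, real_inner_smul_right] at hlow
  rw [show z - q = -(K⁻¹ • w) by module, inner_neg_right, real_inner_smul_right, norm_neg,
    norm_smul, mul_pow, Real.norm_eq_abs, sq_abs] at hup
  have hw : ⟪∇ h q, w⟫ - ⟪∇ h p, w⟫ = ‖w‖ ^ 2 := by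
    rw [← inner_sub_left, real_inner_self_eq_norm_sq]
  field_simp at hup hlow ⊢
  nlinarith

theorem ConvexOn.norm_sq_gradient_sub_le (hc : ConvexOn ℝ univ h) (hh : Differentiable ℝ h)
    {K : ℝ} (hK₀ : 0 < K) (hK : ∀ a b : E, ⟪∇ h a - ∇ h b, a - b⟫ ≤ K * ‖a - b‖ ^ 2)
    (x y : E) : ‖∇ h x - ∇ h y‖ ^ 2 ≤ K * ⟪∇ h x - ∇ h y, x - y⟫ := by
  have hxy := hc.add_inner_gradient_add_norm_sq_le hh hK₀ hK x y
  have hyx := hc.add_inner_gradient_add_norm_sq_le hh hK₀ hK y x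
  rw [norm_sub_rev, ← neg_sub x y, inner_neg_right] at hxy
  rw [inner_sub_left]
  have : ‖∇ h x - ∇ h y‖ ^ 2 / (2 * K) * (2 * K) = ‖∇ h x - ∇ h y‖ ^ 2 := by field_simp
  nlinarith

theorem hasGradientAt_sub_mul_norm_sq {f : E → ℝ} {z : E} (hf : DifferentiableAt ℝ f z) (μ : ℝ) :
    HasGradientAt (fun x => f x - μ / 2 * ‖x‖ ^ 2) (∇ f z - μ • z) z := by
  have hsq : HasFDerivAt (fun x : E => μ / 2 * ‖x‖ ^ 2) (μ • innerSL ℝ z) z := by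
    refine ((hasStrictFDerivAt_norm_sq z).hasFDerivAt.const_mul (μ / 2)).congr_fderiv ?_
    ext w
    simp
    ring
  rw [hasGradientAt_iff_hasFDerivAt, map_sub, map_smul, toDual_gradient]
  exact hf.hasFDerivAt.sub hsq

variable {f : E → ℝ} {μ L : ℝ}

theorem norm_sq_gradient_sub_add_le (hμ : 0 ≤ μ) (hμL : μ ≤ L) (hf : Differentiable ℝ f)
    (hsc : ConvexOn ℝ univ (fun x => f x - μ / 2 * ‖x‖ ^ 2))
    (hlip : ∀ x y, ‖∇ f x - ∇ f y‖ ≤ L * ‖x - y‖) (x y : E) :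
    ‖∇ f x - ∇ f y‖ ^ 2 + μ * L * ‖x - y‖ ^ 2 ≤ (μ + L) * ⟪∇ f x - ∇ f y, x - y⟫ := by
  set h : E → ℝ := fun x => f x - μ / 2 * ‖x‖ ^ 2
  have hh : Differentiable ℝ h := fun z => (hasGradientAt_sub_mul_norm_sq (hf z) μ).differentiableAt
  have hgrad : ∀ a b, ∇ h a - ∇ h b = (∇ f a - ∇ f b) - μ • (a - b) := fun a b => by
    rw [(hasGradientAt_sub_mul_norm_sq (hf a) μ).gradient,
      (hasGradientAt_sub_mul_norm_sq (hf b) μ).gradient]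
    module
  have hinner : ∀ a b, ⟪∇ h a - ∇ h b, a - b⟫ = ⟪∇ f a - ∇ f b, a - b⟫ - μ * ‖a - b‖ ^ 2 :=
    fun a b => by rw [hgrad, inner_sub_left, real_inner_smul_left, real_inner_self_eq_norm_sq]
  have hupper : ∀ a b, ⟪∇ f a - ∇ f b, a - b⟫ ≤ L * ‖a - b‖ ^ 2 := fun a b => by
    have := mul_le_mul_of_nonneg_right (hlip a b) (norm_nonneg (a - b))
    nlinarith [real_inner_le_norm (∇ f a - ∇ f b) (a - b)]
  rcases hμL.eq_or_lt with rfl | hlt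
  · have hmono := hsc.inner_gradient_sub_gradient_nonneg hh x y
    rw [hinner] at hmono
    nlinarith [hlip x y, norm_nonneg (∇ f x - ∇ f y), mul_nonneg hμ hmono]
  · have hco := hsc.norm_sq_gradient_sub_le hh (sub_pos.2 hlt)
      (fun a b => by rw [hinner]; linarith [hupper a b]) x y
    rw [hinner, hgrad, norm_sub_sq_real, real_inner_smul_right, norm_smul, mul_pow,
      Real.norm_eq_abs, sq_abs] at hco
    nlinarith

variable {xstar : E}

theorem inner_gradient_sub_pos (hμ : 0 < μ) (hμL : μ ≤ L) (hf : Differentiable ℝ f)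
    (hsc : ConvexOn ℝ univ (fun x => f x - μ / 2 * ‖x‖ ^ 2))
    (hlip : ∀ x y, ‖∇ f x - ∇ f y‖ ≤ L * ‖x - y‖) (hstar : ∇ f xstar = 0) {x : E}
    (hx : x ≠ xstar) : 0 < ⟪∇ f x, x - xstar⟫ := by
  have key := norm_sq_gradient_sub_add_le hμ.le hμL hf hsc hlip x xstar
  rw [hstar, sub_zero] at key
  have hr : 0 < ‖x - xstar‖ := norm_pos_iff.2 (sub_ne_zero.2 hx)
  have hL : 0 < L := hμ.trans_le hμL
  nlinarith [mul_pos (mul_pos hμ hL) (pow_pos hr 2), sq_nonneg ‖∇ f x‖]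

theorem two_sqrt_div_mul_le_inner_gradient_sub (hμ : 0 < μ) (hμL : μ ≤ L)
    (hf : Differentiable ℝ f) (hsc : ConvexOn ℝ univ (fun x => f x - μ / 2 * ‖x‖ ^ 2))
    (hlip : ∀ x y, ‖∇ f x - ∇ f y‖ ≤ L * ‖x - y‖) (hstar : ∇ f xstar = 0) (x : E) :
    2 * √(μ / L) / (1 + μ / L) * ‖∇ f x‖ * ‖x - xstar‖ ≤ ⟪∇ f x, x - xstar⟫ := by
  have key := norm_sq_gradient_sub_add_le hμ.le hμL hf hsc hlip x xstar
  rw [hstar, sub_zero] at key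
  have hL : 0 < L := hμ.trans_le hμL
  set s := √(μ / L)
  have hμs : μ = s ^ 2 * L := by rw [Real.sq_sqrt (by positivity)]; field_simp
  rw [hμs] at key ⊢
  rw [mul_assoc, div_mul_eq_mul_div, div_le_iff₀ (by positivity),
    show s ^ 2 * L / L = s ^ 2 by field_simp]
  -- AM-GM: `2 s L ‖g‖ ‖r‖ ≤ ‖g‖² + s² L² ‖r‖²`
  refine le_of_mul_le_mul_left ?_ hL
  nlinarith [sq_nonneg (‖∇ f x‖ - s * L * ‖x - xstar‖)]

end Smooth

theorem two_sqrt_div_one_add_le_one {κ : ℝ} (hκ : 0 ≤ κ) : 2 * √κ / (1 + κ) ≤ 1 := by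
  rw [div_le_one (by positivity)]
  nlinarith [sq_nonneg (1 - √κ), Real.sq_sqrt hκ]

theorem sqrt_one_sub_sq_two_sqrt_div_one_add {κ : ℝ} (hκ₀ : 0 ≤ κ) (hκ₁ : κ ≤ 1) :
    √(1 - (2 * √κ / (1 + κ)) ^ 2) = (1 - κ) / (1 + κ) := by
  rw [← Real.sqrt_sq (div_nonneg (sub_nonneg.2 hκ₁) (by positivity : (0 : ℝ) ≤ 1 + κ))]
  congr 1
  field_simp
  rw [Real.sq_sqrt hκ₀]
  ring

theorem stmt6_general {n : ℕ} (f : EuclideanSpace ℝ (Fin n) → ℝ) (μ L : ℝ)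
    (hμ : 0 < μ) (hμL : μ ≤ L)
    (hdiff : Differentiable ℝ f)
    -- μ-strong convexity
    (hsc : ConvexOn ℝ Set.univ (fun x => f x - μ / 2 * ‖x‖ ^ 2))
    -- L-Lipschitz gradient
    (hlip : ∀ x y, ‖gradient f x - gradient f y‖ ≤ L * ‖x - y‖)
    (xstar x₀ x₁ : EuclideanSpace ℝ (Fin n)) (ε : ℝ)
    (hmin : ∀ x, f xstar ≤ f x)
    (hε0 : 0 ≤ ε) (hε1 : ε ≤ 2 * Real.sqrt (μ / L) / (1 + μ / L))
    (hels : ⟪gradient f x₁, x₁ - x₀⟫ = 0)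
    (hang : ⟪gradient f x₀, gradient f x₁⟫ ≤ ε * ‖gradient f x₀‖ * ‖gradient f x₁‖) :
    ‖x₁ - xstar‖ ≤
      (ε + Real.sqrt (1 - ε ^ 2) * (1 - μ / L) / (2 * Real.sqrt (μ / L))) *
        ‖x₀ - xstar‖ := by
  have hL : 0 < L := hμ.trans_le hμL
  have hstar : ∇ f xstar = 0 := by
    simp [gradient, IsLocalMin.fderiv_eq_zero (Filter.Eventually.of_forall hmin)]
  have hpos : ∀ {x}, x ≠ xstar → 0 < ⟪∇ f x, x - xstar⟫ :=
    inner_gradient_sub_pos hμ hμL hdiff hsc hlip hstar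
  have hcos := two_sqrt_div_mul_le_inner_gradient_sub hμ hμL hdiff hsc hlip hstar
  set κ := μ / L
  have hκ₀ : 0 < κ := by positivity
  have hκ₁ : κ ≤ 1 := (div_le_one hL).2 hμL
  set c := 2 * √κ / (1 + κ)
  have hc₀ : 0 < c := by positivity
  have hls : ⟪∇ f x₁, x₁ - xstar⟫ = ⟪∇ f x₁, x₀ - xstar⟫ := by
    rw [← sub_eq_zero, ← inner_sub_right, sub_sub_sub_cancel_right, hels]
  rcases eq_or_ne x₁ xstar with rfl | hx₁
  · rw [sub_self, norm_zero]
    refine mul_nonneg (add_nonneg hε0 (div_nonneg ?_ (by positivity))) (norm_nonneg _)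
    exact mul_nonneg (Real.sqrt_nonneg _) (sub_nonneg.2 hκ₁)
  have hx₀ : x₀ ≠ xstar := by
    rintro rfl
    simpa [hls] using hpos hx₁
  have hg₀ : ∇ f x₀ ≠ 0 := fun h0 => by simpa [h0] using hpos hx₀
  have hg₁ : 0 < ‖∇ f x₁‖ := norm_pos_iff.2 fun h1 => by simpa [h1] using hpos hx₁
  have hangle := inner_le_of_inner_le_of_le_inner hg₀ (by linarith) hε1
    (two_sqrt_div_one_add_le_one hκ₀.le) hang (hcos x₀)
  rw [sqrt_one_sub_sq_two_sqrt_div_one_add hκ₀.le hκ₁] at hangle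
  refine le_of_mul_le_mul_left ?_ (mul_pos hc₀ hg₁)
  calc c * ‖∇ f x₁‖ * ‖x₁ - xstar‖ ≤ ⟪∇ f x₁, x₁ - xstar⟫ := hcos x₁
    _ = ⟪∇ f x₁, x₀ - xstar⟫ := hls
    _ ≤ (ε * c + √(1 - ε ^ 2) * ((1 - κ) / (1 + κ))) * ‖∇ f x₁‖ * ‖x₀ - xstar‖ := hangle
    _ = c * ‖∇ f x₁‖ * ((ε + √(1 - ε ^ 2) * (1 - κ) / (2 * √κ)) * ‖x₀ - xstar‖) := by
      simp only [c]
      field_simp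

/-- Inexact gradient method with exact line search on `f ∈ F_{μ,L}(ℝⁿ)`:
worst-case contraction of the distance to the minimizer. -/
theorem stmt6 {n : ℕ} (f : EuclideanSpace ℝ (Fin n) → ℝ) (μ L : ℝ)
    (hμ : 0 < μ) (hμL : μ ≤ L)
    (hdiff : Differentiable ℝ f)
    -- μ-strong convexity
    (hsc : ConvexOn ℝ Set.univ (fun x => f x - μ / 2 * ‖x‖ ^ 2))
    -- L-Lipschitz gradient
    (hlip : ∀ x y, ‖gradient f x - gradient f y‖ ≤ L * ‖x - y‖)
    (xstar x₀ x₁ d : EuclideanSpace ℝ (Fin n)) (γ ε : ℝ)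
    (hmin : ∀ x, f xstar ≤ f x)
    (hε0 : 0 ≤ ε) (hε1 : ε ≤ 2 * Real.sqrt (μ / L) / (1 + μ / L))
    (hstep : x₁ = x₀ - γ • d)
    (hels : ⟪gradient f x₁, x₁ - x₀⟫ = 0)
    (hang : ⟪gradient f x₀, gradient f x₁⟫ ≤ ε * ‖gradient f x₀‖ * ‖gradient f x₁‖) :
    ‖x₁ - xstar‖ ≤
      (ε + Real.sqrt (1 - ε ^ 2) * (1 - μ / L) / (2 * Real.sqrt (μ / L))) *
        ‖x₀ - xstar‖ :=
  stmt6_general f μ L hμ hμL hdiff hsc hlip xstar x₀ x₁ ε hmin hε0 hε1 hels hang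
end

section
/- Let f ∈ F_{μ,L}(ℝⁿ) with minimizer x_*, let 0 ≤ ε ≤ 2μ/(L+μ), and let 0 ≤ γ ≤ (2μ − ε(L+μ))/((1−ε)μ(L+μ)). If x₁ = x₀ − γd where ‖d − g(x₀)‖ ≤ ε‖g(x₀)‖, then ‖x₁ − x_*‖ ≤ (1 − (1−ε)μγ)·‖x₀ − x_*‖. -/
/-!
Put `r = x₀ - x_*` and `g = ∇f(x₀)`. The function `f - μ/2 ‖·‖²` is convex and `(L - μ)`-smooth,
so its gradient is co-coercive; at `x₀` and `x_*` (where `∇f` vanishes) this is the interpolation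
inequality `μL‖r‖² + ‖g‖² ≤ (μ + L)⟪g, r⟫`, which in particular confines `‖g‖` to
`[μ‖r‖, L‖r‖]`. The error `d - g` moves the iterate by at most `γε‖g‖`, so it suffices to show
`‖r - γg‖ ≤ (1 - (1 - ε)μγ)‖r‖ - γε‖g‖`. After squaring and using the interpolation inequality,
the slack is a quadratic in `‖g‖` vanishing at `‖g‖ = μ‖r‖`, whose linear cofactor is
nonnegative at both ends of `[μ‖r‖, L‖r‖]` precisely under the step-size condition on `γ`.
-/

open scoped RealInnerProductSpace
open Set

theorem ConvexOn.add_fderiv_sub_le {E : Type*} [NormedAddCommGroup E] [NormedSpace ℝ E]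
    {s : Set E} {F : E → ℝ} {F' : E →L[ℝ] ℝ} {x y : E}
    (hF : ConvexOn ℝ s F) (hx : x ∈ s) (hy : y ∈ s) (hF' : HasFDerivAt F F' x) :
    F x + F' (y - x) ≤ F y := by
  let line : ℝ →ᵃ[ℝ] E := AffineMap.lineMap x y
  have hline : HasDerivAt (F ∘ line) (F' (y - x)) 0 := by
    have hF'0 : HasFDerivAt F F' (line 0) := by simpa [line] using hF'
    exact hF'0.comp_hasDerivAt 0 AffineMap.hasDerivAt_lineMap
  have hslope := (hF.comp_affineMap line).le_slope_of_hasDerivAt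
    (by simpa [line] using hx) (by simpa [line] using hy) zero_lt_one hline
  simp only [slope_def_field, Function.comp_apply, line, AffineMap.lineMap_apply_zero,
    AffineMap.lineMap_apply_one, sub_zero, div_one] at hslope
  linarith

section QuadraticBounds

variable {E : Type*} [NormedAddCommGroup E] [InnerProductSpace ℝ E]

theorem norm_sub_sq_le_mul_inner_of_quadratic_bounds {h : E → ℝ} {G : E → E} {M : ℝ}
    (hM : 0 < M) (hlower : ∀ x y, h x + ⟪G x, y - x⟫ ≤ h y)
    (hupper : ∀ x y, h y ≤ h x + ⟪G x, y - x⟫ + M / 2 * ‖y - x‖ ^ 2) (x y : E) :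
    ‖G y - G x‖ ^ 2 ≤ M * ⟪G y - G x, y - x⟫ := by
  -- compare both bounds at the point reached from `b` by a gradient step of length `1 / M`
  have key : ∀ a b, h a + ⟪G a, b - a⟫ + 1 / (2 * M) * ‖G b - G a‖ ^ 2 ≤ h b := by
    intro a b
    set z := b - M⁻¹ • (G b - G a)
    have hlo := hlower a z
    have hup := hupper b z
    have hza : z - a = (b - a) - M⁻¹ • (G b - G a) := by simp only [z]; abel
    have hzb : z - b = -(M⁻¹ • (G b - G a)) := by simp only [z]; abel
    rw [hza, inner_sub_right, inner_smul_right] at hlo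
    rw [hzb, inner_neg_right, inner_smul_right, norm_neg, norm_smul, mul_pow,
      Real.norm_of_nonneg (inv_nonneg.mpr hM.le)] at hup
    have hsplit : ⟪G b, G b - G a⟫ = ⟪G a, G b - G a⟫ + ‖G b - G a‖ ^ 2 := by
      rw [← real_inner_self_eq_norm_sq, inner_sub_left]; ring
    have hM2 : M / 2 * M⁻¹ ^ 2 = 1 / (2 * M) := by field_simp
    linear_combination hlo + hup - M⁻¹ * hsplit + ‖G b - G a‖ ^ 2 * hM2
  have hxy := key x y
  have hyx := key y x
  rw [← norm_neg, neg_sub] at hyx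
  have hinner : ⟪G y, x - y⟫ = -⟪G y, y - x⟫ := by rw [← inner_neg_right, neg_sub]
  have hsum : 1 / M * ‖G y - G x‖ ^ 2 ≤ ⟪G y - G x, y - x⟫ := by
    rw [inner_sub_left]
    linear_combination hxy + hyx - hinner
  rwa [one_div, inv_mul_le_iff₀ hM] at hsum

variable [CompleteSpace E]

theorem add_inner_gradient_add_sq_le_of_convexOn {s : Set E} {f : E → ℝ} {μ : ℝ} {x y : E}
    (hsc : ConvexOn ℝ s (fun x => f x - μ / 2 * ‖x‖ ^ 2)) (hx : x ∈ s) (hy : y ∈ s)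
    (hf : DifferentiableAt ℝ f x) :
    f x + ⟪gradient f x, y - x⟫ + μ / 2 * ‖y - x‖ ^ 2 ≤ f y := by
  have hsq : HasFDerivAt (fun x : E => μ / 2 * ‖x‖ ^ 2) ((μ / 2) • (2 • innerSL ℝ x)) x :=
    (hasStrictFDerivAt_norm_sq x).hasFDerivAt.const_mul (μ / 2)
  have h := hsc.add_fderiv_sub_le hx hy
    ((hasGradientAt_iff_hasFDerivAt.mp hf.hasGradientAt).sub hsq)
  have hexp : ‖y‖ ^ 2 = ‖x‖ ^ 2 + 2 * ⟪x, y - x⟫ + ‖y - x‖ ^ 2 := by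
    simpa using norm_add_sq_real x (y - x)
  simp only [sub_apply, smul_apply, Nat.cast_ofNat, innerSL_apply_apply,
    InnerProductSpace.toDual_apply_apply, smul_eq_mul, nsmul_eq_mul] at h
  linear_combination h - μ / 2 * hexp

theorem le_add_inner_gradient_add_sq_of_lipschitz {f : E → ℝ} {L : ℝ} (hf : Differentiable ℝ f)
    (hlip : ∀ x y, ‖gradient f x - gradient f y‖ ≤ L * ‖x - y‖) (x y : E) :
    f y ≤ f x + ⟪gradient f x, y - x⟫ + L / 2 * ‖y - x‖ ^ 2 := by
  set u := y - x
  let ψ : ℝ → ℝ := fun t => f (x + t • u) - t * ⟪gradient f x, u⟫ - L / 2 * t ^ 2 * ‖u‖ ^ 2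
  have hψ : ∀ t,
      HasDerivAt ψ (⟪gradient f (x + t • u) - gradient f x, u⟫ - L * t * ‖u‖ ^ 2) t := by
    intro t
    have hline : HasDerivAt (fun s : ℝ => x + s • u) u t := by
      simpa using ((hasDerivAt_id t).smul_const u).const_add x
    have hfline := (hasGradientAt_iff_hasFDerivAt.mp (hf (x + t • u)).hasGradientAt).comp_hasDerivAt
      t hline
    refine ((hfline.sub ((hasDerivAt_id t).mul_const ⟪gradient f x, u⟫)).sub
      (((hasDerivAt_pow 2 t).const_mul (L / 2)).mul_const (‖u‖ ^ 2))).congr_deriv ?_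
    simp only [InnerProductSpace.toDual_apply_apply, inner_sub_left]
    ring
  have hψ_nonpos : ∀ t ∈ interior (Icc (0 : ℝ) 1),
      ⟪gradient f (x + t • u) - gradient f x, u⟫ - L * t * ‖u‖ ^ 2 ≤ 0 := by
    intro t ht
    rw [interior_Icc] at ht
    have hnorm : ‖x + t • u - x‖ = t * ‖u‖ := by
      rw [add_sub_cancel_left, norm_smul, Real.norm_of_nonneg ht.1.le]
    have := calc ⟪gradient f (x + t • u) - gradient f x, u⟫
        ≤ ‖gradient f (x + t • u) - gradient f x‖ * ‖u‖ := real_inner_le_norm _ _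
      _ ≤ L * ‖x + t • u - x‖ * ‖u‖ := by gcongr; exact hlip _ _
    rw [hnorm] at this
    linarith
  have hanti := antitoneOn_of_hasDerivWithinAt_nonpos (convex_Icc 0 1)
    (fun t _ => (hψ t).continuousAt.continuousWithinAt) (fun t _ => (hψ t).hasDerivWithinAt)
    hψ_nonpos
  have := hanti (left_mem_Icc.mpr zero_le_one) (right_mem_Icc.mpr zero_le_one) zero_le_one
  simp only [ψ, zero_smul, add_zero, zero_mul, sub_zero, one_smul, one_mul, u,
    add_sub_cancel] at this
  linarith

theorem mul_norm_sub_sq_add_norm_gradient_sub_sq_le {f : E → ℝ} {μ L : ℝ} (hμL : μ < L)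
    (hf : Differentiable ℝ f) (hsc : ConvexOn ℝ univ (fun x => f x - μ / 2 * ‖x‖ ^ 2))
    (hlip : ∀ x y, ‖gradient f x - gradient f y‖ ≤ L * ‖x - y‖) (x y : E) :
    μ * L * ‖y - x‖ ^ 2 + ‖gradient f y - gradient f x‖ ^ 2
      ≤ (μ + L) * ⟪gradient f y - gradient f x, y - x⟫ := by
  have hexp : ∀ x y : E, ‖y‖ ^ 2 = ‖x‖ ^ 2 + 2 * ⟪x, y - x⟫ + ‖y - x‖ ^ 2 := fun x y => by
    simpa using norm_add_sq_real x (y - x)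
  -- `f - μ/2 ‖·‖²` has gradient `∇f - μ id`
  have hcoco := norm_sub_sq_le_mul_inner_of_quadratic_bounds
    (h := fun x => f x - μ / 2 * ‖x‖ ^ 2) (G := fun x => gradient f x - μ • x) (sub_pos.mpr hμL)
    (fun x y => by
      have := add_inner_gradient_add_sq_le_of_convexOn hsc (mem_univ x) (mem_univ y) (hf x)
      simp only [inner_sub_left, real_inner_smul_left]
      linear_combination this + μ / 2 * hexp x y)
    (fun x y => by
      have := le_add_inner_gradient_add_sq_of_lipschitz hf hlip x y
      simp only [inner_sub_left, real_inner_smul_left]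
      linear_combination this - μ / 2 * hexp x y) x y
  have hΔ : gradient f y - μ • y - (gradient f x - μ • x)
      = (gradient f y - gradient f x) - μ • (y - x) := by module
  rw [hΔ] at hcoco
  generalize gradient f y - gradient f x = a at hcoco ⊢
  generalize y - x = b at hcoco ⊢
  rw [norm_sub_sq_real, inner_sub_left, real_inner_smul_left, real_inner_smul_right, norm_smul,
    mul_pow, Real.norm_eq_abs, sq_abs, real_inner_self_eq_norm_sq] at hcoco
  linear_combination hcoco

end QuadraticBounds

section StepSize

variable {μ L ε γ : ℝ}

theorem lt_one_of_mul_add_le (hμ : 0 < μ) (hμL : μ < L) (hε : ε * (L + μ) ≤ 2 * μ) : ε < 1 := by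
  nlinarith

theorem mul_add_mul_le_two_of_stepsize (hμ : 0 < μ) (hμL : μ < L) (hε0 : 0 ≤ ε)
    (hε1 : ε * (L + μ) ≤ 2 * μ) (hγ1 : γ * ((1 - ε) * μ * (L + μ)) ≤ 2 * μ - ε * (L + μ)) :
    γ * ((1 + ε) * L + (1 - ε) * μ) ≤ 2 := by
  have hε : ε < 1 := lt_one_of_mul_add_le hμ hμL hε1
  have hD : 0 < (1 - ε) * μ * (L + μ) := mul_pos (mul_pos (sub_pos.mpr hε) hμ) (by linarith)
  have hgap : (2 * μ - ε * (L + μ)) * ((1 + ε) * L + (1 - ε) * μ)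
      ≤ 2 * ((1 - ε) * μ * (L + μ)) := by
    have hLμ : 0 ≤ L - μ := by linarith
    have hslack : 0 ≤ ε * ((L - μ) * (L - μ + ε * (L + μ))) :=
      mul_nonneg hε0 (mul_nonneg hLμ (add_nonneg hLμ (mul_nonneg hε0 (by linarith))))
    linear_combination hslack
  refine le_of_mul_le_mul_right ?_ hD
  calc γ * ((1 + ε) * L + (1 - ε) * μ) * ((1 - ε) * μ * (L + μ))
      = γ * ((1 - ε) * μ * (L + μ)) * ((1 + ε) * L + (1 - ε) * μ) := by ring
    _ ≤ (2 * μ - ε * (L + μ)) * ((1 + ε) * L + (1 - ε) * μ) := by gcongr; nlinarith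
    _ ≤ 2 * ((1 - ε) * μ * (L + μ)) := hgap

theorem sub_two_mul_add_sq_le_sq_of_stepsize {R s c : ℝ} (hμ : 0 < μ) (hμL : μ < L)
    (hε0 : 0 ≤ ε) (hε1 : ε * (L + μ) ≤ 2 * μ) (hγ0 : 0 ≤ γ)
    (hγ1 : γ * ((1 - ε) * μ * (L + μ)) ≤ 2 * μ - ε * (L + μ))
    (hbetween : 0 ≤ (s - μ * R) * (L * R - s)) (hint : μ * L * R ^ 2 + s ^ 2 ≤ (μ + L) * c) :
    R ^ 2 - 2 * γ * c + γ ^ 2 * s ^ 2 ≤ ((1 - (1 - ε) * μ * γ) * R - γ * ε * s) ^ 2 := by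
  have hε := lt_one_of_mul_add_le hμ hμL hε1
  have hQ := mul_add_mul_le_two_of_stepsize hμ hμL hε0 hε1 hγ1
  have hT : 0 ≤ 2 * μ - ε * (L + μ) - γ * ((1 - ε) * μ * (L + μ)) := by linarith
  -- as a quadratic in `s` the slack vanishes at `s = μR`, and its linear cofactor is written
  -- through its (nonnegative) values at `s = μR` and `s = LR`
  have hslack : (L + μ) * (L - μ) * (((1 - (1 - ε) * μ * γ) * R - γ * ε * s) ^ 2
        - (R ^ 2 - 2 * γ * c + γ ^ 2 * s ^ 2))
      = 2 * γ * (2 * μ - ε * (L + μ) - γ * ((1 - ε) * μ * (L + μ))) * ((s - μ * R) * (L * R - s))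
        + γ * (L + μ) * (1 - ε) * (2 - γ * ((1 + ε) * L + (1 - ε) * μ)) * (s - μ * R) ^ 2
        + 2 * γ * (L - μ) * ((μ + L) * c - (μ * L * R ^ 2 + s ^ 2)) := by
    ring
  have hpos : 0 ≤ (L + μ) * (L - μ) * (((1 - (1 - ε) * μ * γ) * R - γ * ε * s) ^ 2
        - (R ^ 2 - 2 * γ * c + γ ^ 2 * s ^ 2)) := by
    rw [hslack]
    have h1 := mul_nonneg (mul_nonneg (mul_nonneg zero_le_two hγ0) hT) hbetween
    have h2 := mul_nonneg (mul_nonneg (mul_nonneg (mul_nonneg hγ0 (by linarith : 0 ≤ L + μ))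
      (sub_nonneg.mpr hε.le)) (sub_nonneg.mpr hQ)) (sq_nonneg (s - μ * R))
    have h3 := mul_nonneg (mul_nonneg (mul_nonneg zero_le_two hγ0) (sub_nonneg.mpr hμL.le))
      (sub_nonneg.mpr hint)
    linarith
  have hcoef : 0 < (L + μ) * (L - μ) := mul_pos (by linarith) (by linarith)
  linarith [nonneg_of_mul_nonneg_right hpos hcoef]

theorem norm_sub_smul_le_of_interpolation {E : Type*} [NormedAddCommGroup E]
    [InnerProductSpace ℝ E] {r g : E} (hμ : 0 < μ) (hμL : μ < L) (hε0 : 0 ≤ ε)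
    (hε1 : ε * (L + μ) ≤ 2 * μ) (hγ0 : 0 ≤ γ)
    (hγ1 : γ * ((1 - ε) * μ * (L + μ)) ≤ 2 * μ - ε * (L + μ))
    (hint : μ * L * ‖r‖ ^ 2 + ‖g‖ ^ 2 ≤ (μ + L) * ⟪g, r⟫) :
    ‖r - γ • g‖ ≤ (1 - (1 - ε) * μ * γ) * ‖r‖ - γ * ε * ‖g‖ := by
  set R := ‖r‖
  set s := ‖g‖
  have hR : 0 ≤ R := norm_nonneg r
  have hbetween : 0 ≤ (s - μ * R) * (L * R - s) := by nlinarith [real_inner_le_norm g r]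
  have hsL : s ≤ L * R := by
    by_contra! h
    have hpos : 0 < s - μ * R := by nlinarith [mul_nonneg (sub_nonneg.mpr hμL.le) hR]
    linarith [mul_neg_of_pos_of_neg hpos (sub_neg.mpr h)]
  have hγ' : γ * ((1 - ε) * μ + ε * L) ≤ 1 := by
    have hε := lt_one_of_mul_add_le hμ hμL hε1
    nlinarith [mul_add_mul_le_two_of_stepsize hμ hμL hε0 hε1 hγ1,
      mul_nonneg hγ0 (mul_nonneg (sub_nonneg.mpr hε.le) (sub_nonneg.mpr hμL.le))]
  have hrhs : 0 ≤ (1 - (1 - ε) * μ * γ) * R - γ * ε * s := by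
    nlinarith [mul_le_mul_of_nonneg_left hsL (mul_nonneg hγ0 hε0),
      mul_nonneg (sub_nonneg.mpr hγ') hR]
  have hsq : ‖r - γ • g‖ ^ 2 = R ^ 2 - 2 * γ * ⟪g, r⟫ + γ ^ 2 * s ^ 2 := by
    rw [norm_sub_sq_real, real_inner_smul_right, norm_smul, Real.norm_of_nonneg hγ0,
      real_inner_comm]
    ring
  rw [← pow_le_pow_iff_left₀ (norm_nonneg _) hrhs two_ne_zero, hsq]
  exact sub_two_mul_add_sq_le_sq_of_stepsize hμ hμL hε0 hε1 hγ0 hγ1 hbetween hint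

end StepSize

/-- Inexact gradient method with fixed step length on `f ∈ F_{μ,L}(ℝⁿ)`:
worst-case contraction of the distance to the minimizer. -/
theorem stmt8 {n : ℕ} (f : EuclideanSpace ℝ (Fin n) → ℝ) (μ L : ℝ)
    (hμ : 0 < μ) (hμL : μ < L)
    (hdiff : Differentiable ℝ f)
    -- μ-strong convexity
    (hsc : ConvexOn ℝ Set.univ (fun x => f x - μ / 2 * ‖x‖ ^ 2))
    -- L-Lipschitz gradient
    (hlip : ∀ x y, ‖gradient f x - gradient f y‖ ≤ L * ‖x - y‖)
    (xstar x₀ x₁ d : EuclideanSpace ℝ (Fin n)) (γ ε : ℝ)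
    (hmin : ∀ x, f xstar ≤ f x)
    (hε0 : 0 ≤ ε) (hε1 : ε ≤ 2 * μ / (L + μ))
    (hγ0 : 0 ≤ γ) (hγ1 : γ ≤ (2 * μ - ε * (L + μ)) / ((1 - ε) * μ * (L + μ)))
    (hstep : x₁ = x₀ - γ • d)
    (hd : ‖d - gradient f x₀‖ ≤ ε * ‖gradient f x₀‖) :
    ‖x₁ - xstar‖ ≤ (1 - (1 - ε) * μ * γ) * ‖x₀ - xstar‖ := by
  have hgrad : gradient f xstar = 0 := by
    have hloc : IsLocalMin f xstar := Filter.Eventually.of_forall hmin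
    exact (InnerProductSpace.toDual ℝ _).map_eq_zero_iff.mp
      (hloc.hasFDerivAt_eq_zero (hasGradientAt_iff_hasFDerivAt.mp (hdiff xstar).hasGradientAt))
  have hε1' : ε * (L + μ) ≤ 2 * μ := (le_div_iff₀ (by linarith)).mp hε1
  have hε : ε < 1 := lt_one_of_mul_add_le hμ hμL hε1'
  have hγ1' : γ * ((1 - ε) * μ * (L + μ)) ≤ 2 * μ - ε * (L + μ) :=
    (le_div_iff₀ (mul_pos (mul_pos (sub_pos.mpr hε) hμ) (by linarith))).mp hγ1
  have hint := mul_norm_sub_sq_add_norm_gradient_sub_sq_le hμL hdiff hsc hlip xstar x₀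
  rw [hgrad, sub_zero] at hint
  have hexact := norm_sub_smul_le_of_interpolation hμ hμL hε0 hε1' hγ0 hγ1' hint
  calc ‖x₁ - xstar‖ = ‖(x₀ - xstar - γ • gradient f x₀) - γ • (d - gradient f x₀)‖ := by
        rw [hstep]; congr 1; module
    _ ≤ ‖x₀ - xstar - γ • gradient f x₀‖ + γ * (ε * ‖gradient f x₀‖) := by
        refine (norm_sub_le _ _).trans ?_
        rw [norm_smul, Real.norm_of_nonneg hγ0]
        gcongr
    _ ≤ (1 - (1 - ε) * μ * γ) * ‖x₀ - xstar‖ := by linarith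
end

section
/- Let Σ and Σ̂ be symmetric positive definite n×n real matrices and ε ∈ (0,1) such that (1−ε)·yᵀΣ̂y ≤ yᵀΣy ≤ (1+ε)·yᵀΣ̂y and (1−ε)·yᵀΣ̂⁻¹y ≤ yᵀΣ⁻¹y ≤ (1+ε)·yᵀΣ̂⁻¹y for all y ∈ ℝⁿ. Then for any vector v ∈ ℝⁿ, ‖Σv − Σ̂v‖_{Σ⁻¹} ≤ √(2ε/(1−ε))·‖Σv‖_{Σ⁻¹}, where ‖u‖_{Σ⁻¹} = √(uᵀΣ⁻¹u). -/
/-!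
Write `u = Σv` and `w = Σ̂v`. Since `Σ⁻¹u = v`, the error expands as
`‖u - w‖²_{Σ⁻¹} = vᵀΣv - 2 vᵀΣ̂v + wᵀΣ⁻¹w`, and `‖u‖²_{Σ⁻¹} = vᵀΣv`. The upper spectral bounds give
`vᵀΣv ≤ (1 + ε) vᵀΣ̂v` and, as `Σ̂⁻¹w = v`, also `wᵀΣ⁻¹w ≤ (1 + ε) vᵀΣ̂v`. Eliminating `vᵀΣ̂v`
bounds the error by `2ε/(1 + ε) · vᵀΣv ≤ 2ε/(1 - ε) · vᵀΣv`.
-/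

open Matrix

namespace Matrix

variable {n α : Type*} [Fintype n] [DecidableEq n] [CommRing α] {A : Matrix n n α}

theorem inv_mulVec_mulVec_of_isUnit_det (hA : IsUnit A.det) (v : n → α) :
    A⁻¹ *ᵥ (A *ᵥ v) = v := by
  rw [mulVec_mulVec, nonsing_inv_mul A hA, one_mulVec]

theorem mulVec_dotProduct_inv_mulVec (hsymm : A.IsSymm) (hA : IsUnit A.det) (v w : n → α) :
    A *ᵥ v ⬝ᵥ A⁻¹ *ᵥ w = v ⬝ᵥ w := by
  rw [dotProduct_mulVec, vecMul_mulVec, hsymm.eq, mul_nonsing_inv A hA, vecMul_one]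

theorem mulVec_sub_dotProduct_inv_mulVec_mulVec_sub (hsymm : A.IsSymm) (hA : IsUnit A.det)
    (v w : n → α) :
    (A *ᵥ v - w) ⬝ᵥ A⁻¹ *ᵥ (A *ᵥ v - w) = v ⬝ᵥ A *ᵥ v - 2 * (v ⬝ᵥ w) + w ⬝ᵥ A⁻¹ *ᵥ w := by
  rw [mulVec_sub, sub_dotProduct, dotProduct_sub, dotProduct_sub,
    mulVec_dotProduct_inv_mulVec hsymm hA, mulVec_dotProduct_inv_mulVec hsymm hA,
    inv_mulVec_mulVec_of_isUnit_det hA, dotProduct_comm w v]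
  ring

end Matrix

theorem sub_two_mul_add_le_of_le_one_add_mul {Q P R ε : ℝ} (hε : 0 < 1 + ε) (hε' : ε ≤ 1)
    (hQ : Q ≤ (1 + ε) * P) (hR : R ≤ (1 + ε) * P) :
    Q - 2 * P + R ≤ 2 * ε / (1 + ε) * Q := by
  rw [div_mul_eq_mul_div, le_div_iff₀ hε]
  nlinarith [mul_le_mul_of_nonneg_left hQ (sub_nonneg.mpr hε')]

/-- If `Σ̂` approximates the positive definite matrix `Σ` in the sense that their quadratic
forms (and those of their inverses) agree up to a relative factor `ε ∈ (0,1)`, then for any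
vector `v`, the direction `Σ̂v` approximates `Σv` in the `Σ⁻¹`-norm with relative error
`√(2ε/(1−ε))`. -/
theorem stmt14 {n : ℕ} (S Shat : Matrix (Fin n) (Fin n) ℝ)
    (hS : S.PosDef) (hShat : Shat.PosDef)
    (ε : ℝ) (hε0 : 0 < ε) (hε1 : ε < 1)
    (h1 : ∀ y : Fin n → ℝ,
      (1 - ε) * (y ⬝ᵥ Shat.mulVec y) ≤ y ⬝ᵥ S.mulVec y ∧
      y ⬝ᵥ S.mulVec y ≤ (1 + ε) * (y ⬝ᵥ Shat.mulVec y))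
    (h2 : ∀ y : Fin n → ℝ,
      (1 - ε) * (y ⬝ᵥ Shat⁻¹.mulVec y) ≤ y ⬝ᵥ S⁻¹.mulVec y ∧
      y ⬝ᵥ S⁻¹.mulVec y ≤ (1 + ε) * (y ⬝ᵥ Shat⁻¹.mulVec y))
    (v : Fin n → ℝ) :
    Real.sqrt ((S.mulVec v - Shat.mulVec v) ⬝ᵥ S⁻¹.mulVec (S.mulVec v - Shat.mulVec v)) ≤
      Real.sqrt (2 * ε / (1 - ε)) *
        Real.sqrt (S.mulVec v ⬝ᵥ S⁻¹.mulVec (S.mulVec v)) := by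
  have hsymm : S.IsSymm := isHermitian_iff_isSymm.mp hS.isHermitian
  have hdet : IsUnit S.det := (isUnit_iff_isUnit_det S).mp hS.isUnit
  have hR : Shat *ᵥ v ⬝ᵥ S⁻¹ *ᵥ (Shat *ᵥ v) ≤ (1 + ε) * (v ⬝ᵥ Shat *ᵥ v) := by
    have h := (h2 (Shat *ᵥ v)).2
    rwa [inv_mulVec_mulVec_of_isUnit_det ((isUnit_iff_isUnit_det Shat).mp hShat.isUnit),
      dotProduct_comm (Shat *ᵥ v) v] at h
  have hQ : 0 ≤ v ⬝ᵥ S *ᵥ v := hS.posSemidef.dotProduct_mulVec_nonneg v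
  have herror := sub_two_mul_add_le_of_le_one_add_mul (by linarith) hε1.le (h1 v).2 hR
  have hconst : 2 * ε / (1 + ε) ≤ 2 * ε / (1 - ε) :=
    div_le_div_of_nonneg_left (by linarith) (by linarith) (by linarith)
  rw [mulVec_sub_dotProduct_inv_mulVec_mulVec_sub hsymm hdet,
    mulVec_dotProduct_inv_mulVec hsymm hdet, ← Real.sqrt_mul (by positivity)]
  exact Real.sqrt_le_sqrt (herror.trans (mul_le_mul_of_nonneg_right hconst hQ))
end

section
/- Under the same spectral approximation hypotheses on Σ and Σ̂ (with parameter ε ∈ (0,1)), if vectors g and g̃ satisfy ‖Σg̃ − Σg‖_{Σ⁻¹} ≤ ε′‖Σg‖_{Σ⁻¹} for some ε′ > 0, then ‖Σ̂g̃ − Σ̂g‖_{Σ⁻¹} ≤ ε′·√((1+ε)/(1−ε))·‖Σg‖_{Σ⁻¹}, and consequently ‖Σ̂g̃ − Σg‖_{Σ⁻¹} ≤ (ε′·√((1+ε)/(1−ε)) + √(2ε/(1−ε)))·‖Σg‖_{Σ⁻¹}. -/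
/-!
Write `‖u‖ = √(uᵀΣ⁻¹u)`, so that `‖Σx‖² = xᵀΣx`. For every `x`, applying the approximation of the
inverses at `Σ̂x` and then that of the matrices at `x` gives
`‖Σ̂x‖² ≤ (1+ε) xᵀΣ̂x ≤ (1+ε)/(1−ε) ‖Σx‖²`; with `x = g̃ − g` this is the first bound.
Expanding the square, `‖Σ̂g − Σg‖² = ‖Σ̂g‖² − 2 gᵀΣ̂g + gᵀΣg ≤ (ε − 1) gᵀΣ̂g + gᵀΣg`, which is at most
`2ε/(1−ε) gᵀΣg` because `gᵀΣg ≤ (1+ε) gᵀΣ̂g`. The second bound is then the triangle inequality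
through `Σ̂g`.
-/

open Matrix

namespace Matrix

variable {m : Type*} [Fintype m]

/-- The paper's `‖x‖_M`. -/
noncomputable def weightedNorm (M : Matrix m m ℝ) (x : m → ℝ) : ℝ :=
  √(x ⬝ᵥ M *ᵥ x)

/-- `(1 − ε) B ≤ A ≤ (1 + ε) B` in the Loewner order. -/
def IsSpectralApprox (ε : ℝ) (A B : Matrix m m ℝ) : Prop :=
  ∀ y : m → ℝ, (1 - ε) * (y ⬝ᵥ B *ᵥ y) ≤ y ⬝ᵥ A *ᵥ y ∧ y ⬝ᵥ A *ᵥ y ≤ (1 + ε) * (y ⬝ᵥ B *ᵥ y)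

theorem PosSemidef.weightedNorm_add_le {M : Matrix m m ℝ} (hM : M.PosSemidef) (x y : m → ℝ) :
    weightedNorm M (x + y) ≤ weightedNorm M x + weightedNorm M y := by
  let E := M.toSeminormedAddCommGroup hM
  have h_norm (z : m → ℝ) : @norm _ E.toNorm z = weightedNorm M z := by
    rw [weightedNorm, dotProduct_comm]
    rfl
  simpa only [h_norm] using @norm_add_le _ E.toSeminormedAddGroup x y

theorem weightedNorm_le_sqrt_mul {M N : Matrix m m ℝ} {x y : m → ℝ} {c : ℝ} (hc : 0 ≤ c)
    (h : x ⬝ᵥ M *ᵥ x ≤ c * (y ⬝ᵥ N *ᵥ y)) :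
    weightedNorm M x ≤ √c * weightedNorm N y := by
  rw [weightedNorm, weightedNorm, ← Real.sqrt_mul hc]
  exact Real.sqrt_le_sqrt h

variable [DecidableEq m]

theorem mulVec_dotProduct_inv_mulVec_mulVec {M : Matrix m m ℝ} (hM : IsUnit M.det)
    (x : m → ℝ) : M *ᵥ x ⬝ᵥ M⁻¹ *ᵥ M *ᵥ x = x ⬝ᵥ M *ᵥ x := by
  rw [mulVec_mulVec, nonsing_inv_mul M hM, one_mulVec, dotProduct_comm]

theorem IsHermitian.sub_mulVec_dotProduct_inv_mulVec {M : Matrix m m ℝ} (hM : M.IsHermitian)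
    (hM_det : IsUnit M.det) (x y : m → ℝ) :
    (y - M *ᵥ x) ⬝ᵥ M⁻¹ *ᵥ (y - M *ᵥ x) = y ⬝ᵥ M⁻¹ *ᵥ y - 2 * (x ⬝ᵥ y) + x ⬝ᵥ M *ᵥ x := by
  have h_cancel : M⁻¹ *ᵥ M *ᵥ x = x := by
    rw [mulVec_mulVec, nonsing_inv_mul M hM_det, one_mulVec]
  have h_cross : M *ᵥ x ⬝ᵥ M⁻¹ *ᵥ y = x ⬝ᵥ y := by
    have h_symm : M⁻¹ᵀ = M⁻¹ := by simpa using hM.inv.eq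
    rw [dotProduct_mulVec, ← mulVec_transpose, h_symm, h_cancel, dotProduct_comm]
  rw [mulVec_sub, dotProduct_sub, sub_dotProduct, sub_dotProduct, h_cross, h_cancel,
    dotProduct_comm y x, dotProduct_comm (M *ᵥ x) x]
  ring

section SpectralApprox

variable {S Shat : Matrix m m ℝ} {ε : ℝ}

theorem IsSpectralApprox.weightedNorm_inv_mulVec_le (h : IsSpectralApprox ε S Shat)
    (h_inv : IsSpectralApprox ε S⁻¹ Shat⁻¹) (hS : IsUnit S.det) (hShat : IsUnit Shat.det)
    (hε0 : 0 ≤ ε) (hε1 : ε < 1) (x : m → ℝ) :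
    weightedNorm S⁻¹ (Shat *ᵥ x) ≤ √((1 + ε) / (1 - ε)) * weightedNorm S⁻¹ (S *ᵥ x) := by
  have h_low := (h x).1
  have h_up := (h_inv (Shat *ᵥ x)).2
  rw [mulVec_dotProduct_inv_mulVec_mulVec hShat] at h_up
  apply weightedNorm_le_sqrt_mul (div_nonneg (by linarith) (by linarith))
  rw [mulVec_dotProduct_inv_mulVec_mulVec hS, div_mul_eq_mul_div, le_div_iff₀ (by linarith)]
  nlinarith

theorem IsSpectralApprox.weightedNorm_inv_mulVec_sub_le (h : IsSpectralApprox ε S Shat)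
    (h_inv : IsSpectralApprox ε S⁻¹ Shat⁻¹) (hS : S.PosDef) (hShat : IsUnit Shat.det)
    (hε0 : 0 ≤ ε) (hε1 : ε < 1) (g : m → ℝ) :
    weightedNorm S⁻¹ (Shat *ᵥ g - S *ᵥ g) ≤ √(2 * ε / (1 - ε)) * weightedNorm S⁻¹ (S *ᵥ g) := by
  have hS_det := (isUnit_iff_isUnit_det S).mp hS.isUnit
  have h_up := (h g).2
  have h_inv_up := (h_inv (Shat *ᵥ g)).2
  rw [mulVec_dotProduct_inv_mulVec_mulVec hShat] at h_inv_up
  have hq := hS.posSemidef.dotProduct_mulVec_nonneg g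
  simp only [star_trivial] at hq
  apply weightedNorm_le_sqrt_mul (div_nonneg (by linarith) (by linarith))
  rw [hS.isHermitian.sub_mulVec_dotProduct_inv_mulVec hS_det,
    mulVec_dotProduct_inv_mulVec_mulVec hS_det, div_mul_eq_mul_div, le_div_iff₀ (by linarith)]
  -- `(1 + ε) * (rhs - lhs) = (1 - ε²) ((1 + ε) q̂ - ‖Σ̂g‖²) + (1 - ε)² ((1 + ε) q̂ - q) + 4ε² q`
  -- with `q = gᵀΣg`, `q̂ = gᵀΣ̂g`
  nlinarith [mul_nonneg (sub_nonneg.2 hε1.le) (sub_nonneg.2 h_inv_up),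
    mul_nonneg (sq_nonneg (1 - ε)) (sub_nonneg.2 h_up), mul_nonneg (sq_nonneg ε) hq]

end SpectralApprox

end Matrix

theorem stmt15_general {n : ℕ} (S Shat : Matrix (Fin n) (Fin n) ℝ)
    (hS : S.PosDef) (hShat : Shat.PosDef)
    (ε : ℝ) (hε0 : 0 < ε) (hε1 : ε < 1)
    (h1 : ∀ y : Fin n → ℝ,
      (1 - ε) * (y ⬝ᵥ Shat.mulVec y) ≤ y ⬝ᵥ S.mulVec y ∧
      y ⬝ᵥ S.mulVec y ≤ (1 + ε) * (y ⬝ᵥ Shat.mulVec y))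
    (h2 : ∀ y : Fin n → ℝ,
      (1 - ε) * (y ⬝ᵥ Shat⁻¹.mulVec y) ≤ y ⬝ᵥ S⁻¹.mulVec y ∧
      y ⬝ᵥ S⁻¹.mulVec y ≤ (1 + ε) * (y ⬝ᵥ Shat⁻¹.mulVec y))
    (g gt : Fin n → ℝ) (ε' : ℝ)
    (hg : Real.sqrt ((S.mulVec gt - S.mulVec g) ⬝ᵥ S⁻¹.mulVec (S.mulVec gt - S.mulVec g)) ≤
      ε' * Real.sqrt (S.mulVec g ⬝ᵥ S⁻¹.mulVec (S.mulVec g))) :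
    Real.sqrt ((Shat.mulVec gt - Shat.mulVec g) ⬝ᵥ
        S⁻¹.mulVec (Shat.mulVec gt - Shat.mulVec g)) ≤
      ε' * Real.sqrt ((1 + ε) / (1 - ε)) *
        Real.sqrt (S.mulVec g ⬝ᵥ S⁻¹.mulVec (S.mulVec g)) ∧
    Real.sqrt ((Shat.mulVec gt - S.mulVec g) ⬝ᵥ
        S⁻¹.mulVec (Shat.mulVec gt - S.mulVec g)) ≤
      (ε' * Real.sqrt ((1 + ε) / (1 - ε)) + Real.sqrt (2 * ε / (1 - ε))) *
        Real.sqrt (S.mulVec g ⬝ᵥ S⁻¹.mulVec (S.mulVec g)) := by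
  have h1 : IsSpectralApprox ε S Shat := h1
  have h2 : IsSpectralApprox ε S⁻¹ Shat⁻¹ := h2
  have hS_det := (isUnit_iff_isUnit_det S).mp hS.isUnit
  have hShat_det := (isUnit_iff_isUnit_det Shat).mp hShat.isUnit
  have first : weightedNorm S⁻¹ (Shat *ᵥ gt - Shat *ᵥ g) ≤
      ε' * √((1 + ε) / (1 - ε)) * weightedNorm S⁻¹ (S *ᵥ g) := by
    calc weightedNorm S⁻¹ (Shat *ᵥ gt - Shat *ᵥ g)
        ≤ √((1 + ε) / (1 - ε)) * weightedNorm S⁻¹ (S *ᵥ (gt - g)) := by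
          rw [← mulVec_sub]
          exact h1.weightedNorm_inv_mulVec_le h2 hS_det hShat_det hε0.le hε1 _
      _ ≤ √((1 + ε) / (1 - ε)) * (ε' * weightedNorm S⁻¹ (S *ᵥ g)) := by
          rw [mulVec_sub]
          gcongr
          exact hg
      _ = ε' * √((1 + ε) / (1 - ε)) * weightedNorm S⁻¹ (S *ᵥ g) := by ring
  refine ⟨first, ?_⟩
  calc weightedNorm S⁻¹ (Shat *ᵥ gt - S *ᵥ g)
      = weightedNorm S⁻¹ ((Shat *ᵥ gt - Shat *ᵥ g) + (Shat *ᵥ g - S *ᵥ g)) := by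
        rw [sub_add_sub_cancel]
    _ ≤ weightedNorm S⁻¹ (Shat *ᵥ gt - Shat *ᵥ g) + weightedNorm S⁻¹ (Shat *ᵥ g - S *ᵥ g) :=
        hS.inv.posSemidef.weightedNorm_add_le _ _
    _ ≤ ε' * √((1 + ε) / (1 - ε)) * weightedNorm S⁻¹ (S *ᵥ g) +
        √(2 * ε / (1 - ε)) * weightedNorm S⁻¹ (S *ᵥ g) :=
        add_le_add first (h1.weightedNorm_inv_mulVec_sub_le h2 hS hShat_det hε0.le hε1 g)
    _ = (ε' * √((1 + ε) / (1 - ε)) + √(2 * ε / (1 - ε))) * weightedNorm S⁻¹ (S *ᵥ g) := by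
        ring

/-- Under the spectral approximation hypotheses on `Σ` and `Σ̂`, if `g̃` approximates `g` in
the sense `‖Σg̃ − Σg‖_{Σ⁻¹} ≤ ε′‖Σg‖_{Σ⁻¹}`, then
`‖Σ̂g̃ − Σ̂g‖_{Σ⁻¹} ≤ ε′√((1+ε)/(1−ε))‖Σg‖_{Σ⁻¹}` and consequently
`‖Σ̂g̃ − Σg‖_{Σ⁻¹} ≤ (ε′√((1+ε)/(1−ε)) + √(2ε/(1−ε)))‖Σg‖_{Σ⁻¹}`. -/
theorem stmt15 {n : ℕ} (S Shat : Matrix (Fin n) (Fin n) ℝ)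
    (hS : S.PosDef) (hShat : Shat.PosDef)
    (ε : ℝ) (hε0 : 0 < ε) (hε1 : ε < 1)
    (h1 : ∀ y : Fin n → ℝ,
      (1 - ε) * (y ⬝ᵥ Shat.mulVec y) ≤ y ⬝ᵥ S.mulVec y ∧
      y ⬝ᵥ S.mulVec y ≤ (1 + ε) * (y ⬝ᵥ Shat.mulVec y))
    (h2 : ∀ y : Fin n → ℝ,
      (1 - ε) * (y ⬝ᵥ Shat⁻¹.mulVec y) ≤ y ⬝ᵥ S⁻¹.mulVec y ∧
      y ⬝ᵥ S⁻¹.mulVec y ≤ (1 + ε) * (y ⬝ᵥ Shat⁻¹.mulVec y))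
    (g gt : Fin n → ℝ) (ε' : ℝ) (hε' : 0 < ε')
    (hg : Real.sqrt ((S.mulVec gt - S.mulVec g) ⬝ᵥ S⁻¹.mulVec (S.mulVec gt - S.mulVec g)) ≤
      ε' * Real.sqrt (S.mulVec g ⬝ᵥ S⁻¹.mulVec (S.mulVec g))) :
    Real.sqrt ((Shat.mulVec gt - Shat.mulVec g) ⬝ᵥ
        S⁻¹.mulVec (Shat.mulVec gt - Shat.mulVec g)) ≤
      ε' * Real.sqrt ((1 + ε) / (1 - ε)) *
        Real.sqrt (S.mulVec g ⬝ᵥ S⁻¹.mulVec (S.mulVec g)) ∧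
    Real.sqrt ((Shat.mulVec gt - S.mulVec g) ⬝ᵥ
        S⁻¹.mulVec (Shat.mulVec gt - S.mulVec g)) ≤
      (ε' * Real.sqrt ((1 + ε) / (1 - ε)) + Real.sqrt (2 * ε / (1 - ε))) *
        Real.sqrt (S.mulVec g ⬝ᵥ S⁻¹.mulVec (S.mulVec g)) :=
  stmt15_general S Shat hS hShat ε hε0 hε1 h1 h2 g gt ε' hg
end
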